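/- arXiv:2203.02318 — 3 statements merged into one kernel-verified Lean document; each statement's English description precedes it below -/
import Mathlib

section
/- Under SUTVA, unconfoundedness and strict positivity, and assuming A·Y*(1)/π(X) and (1−A)·Y*(0)/(1−π(X)) are integrable, the inverse-probability-weighted observed outcomes identify the conditional means of the potential outcomes: almost surely, E[A·Y/π(X) | σ(X)] = E[Y*(1) | σ(X)] and E[(1−A)·Y/(1−π(X)) | σ(X)] = E[Y*(0) | σ(X)]. -/
open MeasureTheory ProbabilityTheory Set


/-- If the condexp of intersections with `T` factorizes over all `mW`-measurable sets,
then `μ⟦T|m'⟧` is a version of the conditional expectation of `1_T` given `m' ⊔ mW`. -/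
lemma aux_condexp_indicator_sup {Ω : Type*} {m' mW : MeasurableSpace Ω}
    [m0 : MeasurableSpace Ω] {μ : Measure Ω} [IsProbabilityMeasure μ]
    (hm' : m' ≤ m0) (hmW : mW ≤ m0)
    {T : Set Ω} (hT : MeasurableSet T)
    (hindep : ∀ U, MeasurableSet[mW] U →
      (μ⟦U ∩ T | m'⟧) =ᵐ[μ] fun ω => (μ⟦U | m'⟧) ω * (μ⟦T | m'⟧) ω) :
    (μ⟦T | m'⟧) =ᵐ[μ] μ[T.indicator (fun _ => (1:ℝ)) | m' ⊔ mW] := by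
  have hm'' : m' ⊔ mW ≤ m0 := sup_le hm' hmW
  have hind_int : Integrable (T.indicator (fun _ => (1:ℝ))) μ :=
    (integrable_const (1:ℝ)).indicator hT
  set c : Ω → ℝ := μ⟦T | m'⟧ with hc
  have hc_meas : StronglyMeasurable[m'] c := stronglyMeasurable_condExp
  have hc_int : Integrable c μ := integrable_condExp
  -- the basic product sets identity
  have hbasic : ∀ u v, MeasurableSet[m'] u → MeasurableSet[mW] v →
      ∫ x in u ∩ v, c x ∂μ = ∫ x in u ∩ v, T.indicator (fun _ => (1:ℝ)) x ∂μ := by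
    intro u v hu hv
    have hv0 : MeasurableSet v := hmW _ hv
    have hvT_int : Integrable ((v ∩ T).indicator (fun _ => (1:ℝ))) μ :=
      (integrable_const (1:ℝ)).indicator (hv0.inter hT)
    have hv_int : Integrable (v.indicator (fun _ => (1:ℝ))) μ :=
      (integrable_const (1:ℝ)).indicator hv0
    have hcv_int : Integrable (c * v.indicator (fun _ => (1:ℝ))) μ := by
      refine Integrable.mono' hc_int.norm
        (((hc_meas.mono hm').aestronglyMeasurable).mul
          ((stronglyMeasurable_const.indicator hv0).aestronglyMeasurable))
        (ae_of_all _ fun ω => ?_)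
      by_cases h : ω ∈ v <;>
        simp [Pi.mul_apply, Set.indicator_of_mem, Set.indicator_of_notMem, h, abs_nonneg]
    have hpull : μ[c * v.indicator (fun _ => (1:ℝ)) | m'] =ᵐ[μ]
        c * μ[v.indicator (fun _ => (1:ℝ)) | m'] :=
      condExp_mul_of_stronglyMeasurable_left hc_meas hcv_int hv_int
    calc ∫ x in u ∩ v, c x ∂μ
        = ∫ x in u, v.indicator c x ∂μ := (setIntegral_indicator hv0).symm
      _ = ∫ x in u, (c * v.indicator (fun _ => (1:ℝ))) x ∂μ := by
          refine integral_congr_ae (ae_of_all _ fun ω => ?_)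
          by_cases h : ω ∈ v <;> simp [h]
      _ = ∫ x in u, (μ[c * v.indicator (fun _ => (1:ℝ)) | m']) x ∂μ :=
          (setIntegral_condExp hm' hcv_int hu).symm
      _ = ∫ x in u, ((μ⟦v | m'⟧) x * c x) ∂μ := by
          refine setIntegral_congr_ae (hm' _ hu) ?_
          filter_upwards [hpull] with ω hω _
          simpa [mul_comm] using hω
      _ = ∫ x in u, (μ⟦v ∩ T | m'⟧) x ∂μ := by
          refine setIntegral_congr_ae (hm' _ hu) ?_
          filter_upwards [hindep v hv] with ω hω _
          exact hω.symm
      _ = ∫ x in u, (v ∩ T).indicator (fun _ => (1:ℝ)) x ∂μ :=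
          setIntegral_condExp hm' hvT_int hu
      _ = ∫ x in u, v.indicator (T.indicator (fun _ => (1:ℝ))) x ∂μ := by
          simp [Set.indicator_indicator]
      _ = ∫ x in u ∩ v, T.indicator (fun _ => (1:ℝ)) x ∂μ := setIntegral_indicator hv0
  -- π-system and generation
  set pSys : Set (Set Ω) :=
    {s | ∃ u v, MeasurableSet[m'] u ∧ MeasurableSet[mW] v ∧ s = u ∩ v} with hpSys
  have hPi : IsPiSystem pSys := by
    rintro s ⟨u1, v1, hu1, hv1, rfl⟩ t ⟨u2, v2, hu2, hv2, rfl⟩ -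
    exact ⟨u1 ∩ u2, v1 ∩ v2, hu1.inter hu2, hv1.inter hv2, by ext ω; constructor <;>
      (intro h; simp only [Set.mem_inter_iff] at *; tauto)⟩
  have hgen : (m' ⊔ mW : MeasurableSpace Ω) = MeasurableSpace.generateFrom pSys := by
    refine le_antisymm (sup_le ?_ ?_) (MeasurableSpace.generateFrom_le ?_)
    · intro s hs
      exact MeasurableSpace.measurableSet_generateFrom
        ⟨s, Set.univ, hs, @MeasurableSet.univ Ω mW, (Set.inter_univ s).symm⟩
    · intro s hs
      exact MeasurableSpace.measurableSet_generateFrom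
        ⟨Set.univ, s, @MeasurableSet.univ Ω m', hs, (Set.univ_inter s).symm⟩
    · rintro s ⟨u, v, hu, hv, rfl⟩
      exact ((le_sup_left : m' ≤ m' ⊔ mW) u hu).inter ((le_sup_right : mW ≤ m' ⊔ mW) v hv)
  -- the set integral identity for all sets in the sup
  have h_eq : ∀ s, MeasurableSet[m' ⊔ mW] s →
      ∫ x in s, c x ∂μ = ∫ x in s, T.indicator (fun _ => (1:ℝ)) x ∂μ := by
    intro s hs
    refine MeasurableSpace.induction_on_inter (m := m' ⊔ mW)
      (C := fun t _ => ∫ x in t, c x ∂μ = ∫ x in t, T.indicator (fun _ => (1:ℝ)) x ∂μ)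
      hgen hPi ?_ ?_ ?_ ?_ s hs
    · simp
    · rintro t ⟨u, v, hu, hv, rfl⟩
      exact hbasic u v hu hv
    · intro t ht hCt
      have ht0 : MeasurableSet t := hm'' _ ht
      have h1 := integral_add_compl ht0 hc_int
      have h2 := integral_add_compl ht0 hind_int
      have h3 : ∫ x, c x ∂μ = ∫ x, T.indicator (fun _ => (1:ℝ)) x ∂μ :=
        integral_condExp hm'
      linarith
    · intro f hdisj hfm hCf
      rw [integral_iUnion (fun i => hm'' _ (hfm i)) hdisj hc_int.integrableOn,
        integral_iUnion (fun i => hm'' _ (hfm i)) hdisj hind_int.integrableOn]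
      exact tsum_congr hCf
  exact ae_eq_condExp_of_forall_setIntegral_eq hm'' hind_int
    (fun s _ _ => hc_int.integrableOn) (fun s hs _ => h_eq s hs)
    ((hc_meas.mono (le_sup_left : m' ≤ m' ⊔ mW)).aestronglyMeasurable)

/-- Pull-out/independence product rule for conditional expectations. -/
lemma aux_condexp_mul_indicator {Ω : Type*} {m' mW : MeasurableSpace Ω}
    [m0 : MeasurableSpace Ω] {μ : Measure Ω} [IsProbabilityMeasure μ]
    (hm' : m' ≤ m0) (hmW : mW ≤ m0)
    {T : Set Ω} (hT : MeasurableSet T)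
    (hindep : ∀ U, MeasurableSet[mW] U →
      (μ⟦U ∩ T | m'⟧) =ᵐ[μ] fun ω => (μ⟦U | m'⟧) ω * (μ⟦T | m'⟧) ω)
    {W : Ω → ℝ} (hWm : StronglyMeasurable[mW] W) (hW : Integrable W μ)
    (hWT : Integrable (W * T.indicator (fun _ => (1:ℝ))) μ) :
    μ[W * T.indicator (fun _ => (1:ℝ)) | m']
      =ᵐ[μ] fun ω => (μ[W | m']) ω * (μ⟦T | m'⟧) ω := by
  have hm'' : m' ⊔ mW ≤ m0 := sup_le hm' hmW
  have hind_int : Integrable (T.indicator (fun _ => (1:ℝ))) μ :=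
    (integrable_const (1:ℝ)).indicator hT
  set c : Ω → ℝ := μ⟦T | m'⟧ with hc
  have hc_meas : StronglyMeasurable[m'] c := stronglyMeasurable_condExp
  have hc_int : Integrable c μ := integrable_condExp
  have hc0 : 0 ≤ᵐ[μ] c :=
    condExp_nonneg (ae_of_all _ fun ω => Set.indicator_nonneg (fun _ _ => zero_le_one) ω)
  have hc1 : c ≤ᵐ[μ] fun _ => (1:ℝ) := by
    have hle : T.indicator (fun _ => (1:ℝ)) ≤ᵐ[μ] fun _ => (1:ℝ) :=
      ae_of_all _ fun ω => by by_cases h : ω ∈ T <;> simp [h]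
    have h := condExp_mono (m := m') hind_int (integrable_const (1:ℝ)) hle
    rwa [condExp_const hm'] at h
  have hcW_int : Integrable (c * W) μ := by
    refine Integrable.mono' hW.norm
      (((hc_meas.mono hm').aestronglyMeasurable).mul hW.aestronglyMeasurable) ?_
    filter_upwards [hc0, hc1] with ω h0 h1
    simp only [Pi.zero_apply] at h0
    have : |c ω| ≤ 1 := abs_le.mpr ⟨by linarith, h1⟩
    calc ‖c ω * W ω‖ = |c ω| * |W ω| := abs_mul _ _
      _ ≤ 1 * |W ω| := by gcongr
      _ = ‖W ω‖ := by simp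
  have hstep : μ[T.indicator (fun _ => (1:ℝ)) | m' ⊔ mW] =ᵐ[μ] c :=
    (aux_condexp_indicator_sup hm' hmW hT hindep).symm
  have hpull : μ[W * T.indicator (fun _ => (1:ℝ)) | m' ⊔ mW]
      =ᵐ[μ] W * μ[T.indicator (fun _ => (1:ℝ)) | m' ⊔ mW] :=
    condExp_mul_of_stronglyMeasurable_left (hWm.mono le_sup_right) hWT hind_int
  have h2 : μ[W * T.indicator (fun _ => (1:ℝ)) | m' ⊔ mW] =ᵐ[μ] c * W := by
    refine hpull.trans ?_
    filter_upwards [hstep] with ω hω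
    simp only [Pi.mul_apply, hω, mul_comm]
  calc μ[W * T.indicator (fun _ => (1:ℝ)) | m']
      =ᵐ[μ] μ[μ[W * T.indicator (fun _ => (1:ℝ)) | m' ⊔ mW] | m'] :=
        (condExp_condExp_of_le le_sup_left hm'').symm
    _ =ᵐ[μ] μ[c * W | m'] := condExp_congr_ae h2
    _ =ᵐ[μ] c * μ[W | m'] := condExp_mul_of_stronglyMeasurable_left hc_meas hcW_int hW
    _ =ᵐ[μ] fun ω => (μ[W | m']) ω * c ω := ae_of_all _ fun ω => mul_comm _ _

lemma ipw_main {Ω : Type*} {mX : MeasurableSpace Ω}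
    [m0 : MeasurableSpace Ω] [StandardBorelSpace Ω] [Nonempty Ω]
    {μ : Measure Ω} [IsProbabilityMeasure μ]
    (hm' : mX ≤ m0)
    (A : Ω → ℝ) (hA : Measurable A) (hA01 : ∀ ω, A ω = 0 ∨ A ω = 1)
    (Y1 Y0 : Ω → ℝ) (hY1 : Integrable Y1 μ) (hY0 : Integrable Y0 μ)
    (Y : Ω → ℝ) (hSUTVA : ∀ ω, Y ω = A ω * Y1 ω + (1 - A ω) * Y0 ω)
    (πX : Ω → ℝ)
    (hπmeas : Measurable[mX] πX)
    (hπver : πX =ᵐ[μ] μ[A | mX])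
    (hunconf : CondIndepFun mX hm' (fun ω => (Y1 ω, Y0 ω)) A μ)
    (ε : ℝ) (hε : 0 < ε)
    (hpos : ∀ᵐ ω ∂μ, ε ≤ πX ω ∧ πX ω ≤ 1 - ε)
    (hint1 : Integrable (fun ω => A ω * Y ω / πX ω) μ)
    (hint0 : Integrable (fun ω => (1 - A ω) * Y ω / (1 - πX ω)) μ) :
    μ[fun ω => A ω * Y ω / πX ω | mX] =ᵐ[μ] μ[Y1 | mX]
    ∧ μ[fun ω => (1 - A ω) * Y ω / (1 - πX ω) | mX] =ᵐ[μ] μ[Y0 | mX] := by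

  -- measurable modifications of the potential outcomes
  set Y1' : Ω → ℝ := hY1.1.mk Y1 with hY1'def
  set Y0' : Ω → ℝ := hY0.1.mk Y0 with hY0'def
  have hY1m : StronglyMeasurable[m0] Y1' := hY1.1.stronglyMeasurable_mk
  have hY0m : StronglyMeasurable[m0] Y0' := hY0.1.stronglyMeasurable_mk
  have hY1ae : Y1 =ᵐ[μ] Y1' := hY1.1.ae_eq_mk
  have hY0ae : Y0 =ᵐ[μ] Y0' := hY0.1.ae_eq_mk
  have hY1' : Integrable Y1' μ := hY1.congr hY1ae
  have hY0' : Integrable Y0' μ := hY0.congr hY0ae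
  set pair' : Ω → ℝ × ℝ := fun ω => (Y1' ω, Y0' ω) with hpair'def
  have hpair'm : Measurable[m0] pair' := hY1m.measurable.prodMk hY0m.measurable
  -- transfer conditional independence to the modifications
  have hpair_ae : (fun ω => (Y1 ω, Y0 ω)) =ᵐ[μ] pair' := by
    filter_upwards [hY1ae, hY0ae] with ω h1 h2
    simp only [pair', h1, h2]
  obtain ⟨N, hsub, hNmeas, hNnull⟩ :=
    @exists_measurable_superset_of_null Ω m0 μ _ (ae_iff.mp hpair_ae)
  have hκnull : ∀ᵐ ω ∂(μ.trim hm'), condExpKernel μ mX ω N = 0 := by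
    have h1 : (fun ω => (condExpKernel μ mX ω).real N) =ᵐ[μ.trim hm'] μ⟦N | mX⟧ :=
      condExpKernel_ae_eq_trim_condExp hm' hNmeas
    have h2 : (μ⟦N | mX⟧) =ᵐ[μ] (0 : Ω → ℝ) := by
      have hind0 : (N.indicator (fun _ => (1:ℝ))) =ᵐ[μ] (0 : Ω → ℝ) := by
        filter_upwards [measure_eq_zero_iff_ae_notMem.mp hNnull] with ω hω
        simp [Set.indicator_of_notMem hω]
      exact (condExp_congr_ae hind0).trans (by rw [condExp_zero])
    have h2' : (μ⟦N | mX⟧) =ᵐ[μ.trim hm'] (0 : Ω → ℝ) :=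
      (stronglyMeasurable_condExp.ae_eq_trim_iff hm' stronglyMeasurable_const).mpr h2
    filter_upwards [h1, h2'] with ω hω1 hω2
    have ht : (condExpKernel μ mX ω).real N = 0 := by
      rw [hω1, hω2]; rfl
    exact ((ENNReal.toReal_eq_zero_iff _).mp ht).resolve_right (measure_ne_top _ _)
  have hunconf' : CondIndepFun mX hm' pair' A μ := by
    refine Kernel.IndepFun.congr' hunconf ?_ ?_
    · filter_upwards [hκnull] with ω hω
      exact ae_iff.mpr (measure_mono_null (fun x hx => hsub hx) hω)
    · exact Filter.Eventually.of_forall fun ω => Filter.EventuallyEq.refl _ _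
  have hProd := (condIndepFun_iff_condExp_inter_preimage_eq_mul
    (hm' := hm') hpair'm hA).mp hunconf'
  -- the sigma-algebra generated by the (modified) potential outcomes
  have hmW : MeasurableSpace.comap pair' inferInstance ≤ m0 := hpair'm.comap_le
  have hpmW : Measurable[MeasurableSpace.comap pair' inferInstance] pair' :=
    fun s hs => ⟨s, hs, rfl⟩
  have hY1'mW : StronglyMeasurable[MeasurableSpace.comap pair' inferInstance] Y1' := (measurable_fst.comp hpmW).stronglyMeasurable
  have hY0'mW : StronglyMeasurable[MeasurableSpace.comap pair' inferInstance] Y0' := (measurable_snd.comp hpmW).stronglyMeasurable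
  -- treatment sets
  set T1 : Set Ω := A ⁻¹' {1} with hT1def
  set T0 : Set Ω := A ⁻¹' {0} with hT0def
  have hT1m : MeasurableSet[m0] T1 := hA (measurableSet_singleton 1)
  have hT0m : MeasurableSet[m0] T0 := hA (measurableSet_singleton 0)
  have hindep1 : ∀ U, MeasurableSet[MeasurableSpace.comap pair' inferInstance] U →
      (μ⟦U ∩ T1 | mX⟧) =ᵐ[μ] fun ω => (μ⟦U | mX⟧) ω * (μ⟦T1 | mX⟧) ω := by
    rintro U ⟨sB, hsB, rfl⟩
    exact hProd sB {1} hsB (measurableSet_singleton 1)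
  have hindep0 : ∀ U, MeasurableSet[MeasurableSpace.comap pair' inferInstance] U →
      (μ⟦U ∩ T0 | mX⟧) =ᵐ[μ] fun ω => (μ⟦U | mX⟧) ω * (μ⟦T0 | mX⟧) ω := by
    rintro U ⟨sB, hsB, rfl⟩
    exact hProd sB {0} hsB (measurableSet_singleton 0)
  -- indicator identities
  have hindT1 : T1.indicator (fun _ => (1:ℝ)) = A := by
    funext ω
    rcases hA01 ω with h | h
    · have hmem : ω ∉ T1 := by simp [hT1def, Set.mem_preimage, h]
      simp [Set.indicator_of_notMem hmem, h]
    · have hmem : ω ∈ T1 := by simp [hT1def, Set.mem_preimage, h]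
      simp [Set.indicator_of_mem hmem, h]
  have hindT0 : T0.indicator (fun _ => (1:ℝ)) = fun ω => 1 - A ω := by
    funext ω
    rcases hA01 ω with h | h
    · have hmem : ω ∈ T0 := by simp [hT0def, Set.mem_preimage, h]
      simp [Set.indicator_of_mem hmem, h]
    · have hmem : ω ∉ T0 := by simp [hT0def, Set.mem_preimage, h]
      simp [Set.indicator_of_notMem hmem, h]
  -- conditional probabilities of treatment
  have hAint : Integrable A μ := by
    refine Integrable.mono' (integrable_const (1:ℝ)) hA.aestronglyMeasurable
      (ae_of_all _ fun ω => ?_)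
    rcases hA01 ω with h | h <;> simp [h]
  have hπ1 : (μ⟦T1 | mX⟧) =ᵐ[μ] πX := by
    rw [show (Set.indicator T1 fun ω => (1:ℝ)) = A from hindT1]
    exact hπver.symm
  have hπ0 : (μ⟦T0 | mX⟧) =ᵐ[μ] fun ω => 1 - πX ω := by
    rw [show (Set.indicator T0 fun ω => (1:ℝ)) = (fun _ => (1:ℝ)) - A from hindT0]
    refine (condExp_sub (integrable_const (1:ℝ)) hAint mX).trans ?_
    rw [condExp_const hm']
    filter_upwards [hπver] with ω hω
    simp [Pi.sub_apply, ← hω]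
  -- integrability of products
  have hWT1 : Integrable (Y1' * T1.indicator (fun _ => (1:ℝ))) μ := by
    refine Integrable.mono' hY1'.norm
      ((hY1m.aestronglyMeasurable).mul
        ((stronglyMeasurable_const.indicator hT1m).aestronglyMeasurable))
      (ae_of_all _ fun ω => ?_)
    by_cases h : ω ∈ T1 <;> simp [Pi.mul_apply, h]
  have hWT0 : Integrable (Y0' * T0.indicator (fun _ => (1:ℝ))) μ := by
    refine Integrable.mono' hY0'.norm
      ((hY0m.aestronglyMeasurable).mul
        ((stronglyMeasurable_const.indicator hT0m).aestronglyMeasurable))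
      (ae_of_all _ fun ω => ?_)
    by_cases h : ω ∈ T0 <;> simp [Pi.mul_apply, h]
  -- the key product identities
  have key1 := aux_condexp_mul_indicator (m0 := m0) hm' hmW hT1m hindep1 hY1'mW hY1' hWT1
  have key0 := aux_condexp_mul_indicator (m0 := m0) hm' hmW hT0m hindep0 hY0'mW hY0' hWT0
  -- rewriting the original integrands
  have horig1 : (fun ω => A ω * Y ω / πX ω)
      =ᵐ[μ] (fun ω => (πX ω)⁻¹) * (Y1' * T1.indicator (fun _ => (1:ℝ))) := by
    filter_upwards [hY1ae] with ω h1
    rcases hA01 ω with h | h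
    · have hmem : ω ∉ T1 := by simp [hT1def, Set.mem_preimage, h]
      simp [Pi.mul_apply, Set.indicator_of_notMem hmem, h]
    · have hmem : ω ∈ T1 := by simp [hT1def, Set.mem_preimage, h]
      have hYω : Y ω = Y1 ω := by rw [hSUTVA ω, h]; ring
      simp [Pi.mul_apply, Set.indicator_of_mem hmem, h, hYω, ← h1, div_eq_inv_mul]
  have horig0 : (fun ω => (1 - A ω) * Y ω / (1 - πX ω))
      =ᵐ[μ] (fun ω => (1 - πX ω)⁻¹) * (Y0' * T0.indicator (fun _ => (1:ℝ))) := by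
    filter_upwards [hY0ae] with ω h1
    rcases hA01 ω with h | h
    · have hmem : ω ∈ T0 := by simp [hT0def, Set.mem_preimage, h]
      have hYω : Y ω = Y0 ω := by rw [hSUTVA ω, h]; ring
      simp [Pi.mul_apply, Set.indicator_of_mem hmem, h, hYω, ← h1, div_eq_inv_mul]
    · have hmem : ω ∉ T0 := by simp [hT0def, Set.mem_preimage, h]
      simp [Pi.mul_apply, Set.indicator_of_notMem hmem, h]
  have hint1' : Integrable ((fun ω => (πX ω)⁻¹) * (Y1' * T1.indicator (fun _ => (1:ℝ)))) μ :=
    hint1.congr horig1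
  have hint0' : Integrable ((fun ω => (1 - πX ω)⁻¹) * (Y0' * T0.indicator (fun _ => (1:ℝ)))) μ :=
    hint0.congr horig0
  have hπinv1 : StronglyMeasurable[mX] (fun ω => (πX ω)⁻¹) := (hπmeas.inv).stronglyMeasurable
  have hπinv0 : StronglyMeasurable[mX] (fun ω => (1 - πX ω)⁻¹) := by
    have h : Measurable[mX] (fun ω => 1 - πX ω) := measurable_const.sub hπmeas
    exact (h.inv).stronglyMeasurable
  constructor
  · calc μ[fun ω => A ω * Y ω / πX ω | mX]
        =ᵐ[μ] μ[(fun ω => (πX ω)⁻¹) * (Y1' * T1.indicator (fun _ => (1:ℝ))) | mX] :=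
          condExp_congr_ae horig1
      _ =ᵐ[μ] (fun ω => (πX ω)⁻¹) * μ[Y1' * T1.indicator (fun _ => (1:ℝ)) | mX] :=
          condExp_mul_of_stronglyMeasurable_left hπinv1 hint1' hWT1
      _ =ᵐ[μ] μ[Y1 | mX] := by
          filter_upwards [key1, hπ1, hpos, condExp_congr_ae (m := mX) hY1ae] with ω hk hπω hp hcong
          simp only [Pi.mul_apply]
          rw [hk, hπω, ← hcong]
          have hne : πX ω ≠ 0 := ne_of_gt (lt_of_lt_of_le hε hp.1)
          field_simp
  · calc μ[fun ω => (1 - A ω) * Y ω / (1 - πX ω) | mX]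
        =ᵐ[μ] μ[(fun ω => (1 - πX ω)⁻¹) * (Y0' * T0.indicator (fun _ => (1:ℝ))) | mX] :=
          condExp_congr_ae horig0
      _ =ᵐ[μ] (fun ω => (1 - πX ω)⁻¹) * μ[Y0' * T0.indicator (fun _ => (1:ℝ)) | mX] :=
          condExp_mul_of_stronglyMeasurable_left hπinv0 hint0' hWT0
      _ =ᵐ[μ] μ[Y0 | mX] := by
          filter_upwards [key0, hπ0, hpos, condExp_congr_ae (m := mX) hY0ae] with ω hk hπω hp hcong
          simp only [Pi.mul_apply]
          rw [hk, hπω, ← hcong]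
          have hne : 1 - πX ω ≠ 0 := ne_of_gt (lt_of_lt_of_le hε (by linarith [hp.2]))
          field_simp


/-- Under SUTVA, unconfoundedness and strict positivity, inverse-probability-weighted
observed outcomes identify the conditional means of the potential outcomes. -/
theorem ipw_identifies_potential_outcome_means
    {Ω : Type*} [m0 : MeasurableSpace Ω] [StandardBorelSpace Ω] [Nonempty Ω]
    {μ : Measure Ω} [IsProbabilityMeasure μ] {p : ℕ}
    (X : Ω → (Fin p → ℝ)) (hX : Measurable X)
    (A : Ω → ℝ) (hA : Measurable A) (hA01 : ∀ ω, A ω = 0 ∨ A ω = 1)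
    (Y1 Y0 : Ω → ℝ) (hY1 : Integrable Y1 μ) (hY0 : Integrable Y0 μ)
    (Y : Ω → ℝ) (hSUTVA : ∀ ω, Y ω = A ω * Y1 ω + (1 - A ω) * Y0 ω)
    (πX : Ω → ℝ)
    (hπmeas : Measurable[MeasurableSpace.comap X inferInstance] πX)
    (hπver : πX =ᵐ[μ] μ[A | MeasurableSpace.comap X inferInstance])
    (hunconf : CondIndepFun (MeasurableSpace.comap X inferInstance) hX.comap_le
      (fun ω => (Y1 ω, Y0 ω)) A μ)
    (ε : ℝ) (hε : 0 < ε)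
    (hpos : ∀ᵐ ω ∂μ, ε ≤ πX ω ∧ πX ω ≤ 1 - ε)
    (hint1 : Integrable (fun ω => A ω * Y ω / πX ω) μ)
    (hint0 : Integrable (fun ω => (1 - A ω) * Y ω / (1 - πX ω)) μ) :
    μ[fun ω => A ω * Y ω / πX ω | MeasurableSpace.comap X inferInstance]
      =ᵐ[μ] μ[Y1 | MeasurableSpace.comap X inferInstance]
    ∧ μ[fun ω => (1 - A ω) * Y ω / (1 - πX ω) | MeasurableSpace.comap X inferInstance]
      =ᵐ[μ] μ[Y0 | MeasurableSpace.comap X inferInstance] :=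
  ipw_main hX.comap_le A hA hA01 Y1 Y0 hY1 hY0 Y hSUTVA πX hπmeas hπver hunconf
    ε hε hpos hint1 hint0
end

section
/- Define the transformed response Ỹ = Y·(A − π(X)) / (π(X)·(1 − π(X))). Under SUTVA, unconfoundedness and strict positivity, the transformed response has the contrast function as its conditional mean: almost surely, E[Ỹ | σ(X)] = E[Y*(1) − Y*(0) | σ(X)]. -/
open MeasureTheory ProbabilityTheory Filter Set



section Aux

variable {Ω : Type*} {m' : MeasurableSpace Ω} {mΩ : MeasurableSpace Ω} [StandardBorelSpace Ω]
  [Nonempty Ω] {μ : Measure Ω} [IsFiniteMeasure μ]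

lemma condExpKernel_null_ae_trim (hm' : m' ≤ mΩ) {N : Set Ω} (hN : MeasurableSet N)
    (hμN : μ N = 0) : ∀ᵐ a ∂(μ.trim hm'), condExpKernel μ m' a N = 0 := by
  have h1 := condExpKernel_ae_eq_trim_condExp (μ := μ) hm' hN
  have h2 : (μ⟦N | m'⟧) =ᵐ[μ.trim hm'] 0 := by
    have hind : N.indicator (fun _ => (1 : ℝ)) =ᵐ[μ] (0 : Ω → ℝ) := by
      filter_upwards [measure_eq_zero_iff_ae_notMem.mp hμN] with a ha
      simp [Set.indicator_of_notMem ha]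
    exact StronglyMeasurable.ae_eq_trim_of_stronglyMeasurable hm' stronglyMeasurable_condExp
      stronglyMeasurable_const ((condExp_congr_ae hind).trans (by rw [condExp_zero]))
  filter_upwards [h1, h2] with a ha1 ha2
  have hto : (condExpKernel μ m' a N).toReal = 0 := by have := ha1.trans ha2; exact this
  have hne : condExpKernel μ m' a N ≠ ⊤ := measure_ne_top _ N
  exact ((ENNReal.toReal_eq_zero_iff _).mp hto).resolve_right hne

lemma condIndepFun_congr_left {β γ : Type*} [MeasurableSpace β] [MeasurableSpace γ]
    (hm' : m' ≤ mΩ) {f f' : Ω → β} {g : Ω → γ}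
    (hfg : CondIndepFun m' hm' f g μ) (h : f =ᵐ[μ] f') :
    CondIndepFun m' hm' f' g μ := by
  have h' : ∀ᵐ a ∂(μ.trim hm'), f =ᵐ[condExpKernel μ m' a] f' := by
    have hμN : μ (toMeasurable μ {x | f x ≠ f' x}) = 0 := by
      rw [measure_toMeasurable]
      exact ae_iff.mp h
    filter_upwards [condExpKernel_null_ae_trim hm' (measurableSet_toMeasurable μ _) hμN]
      with a ha
    have h0 : condExpKernel μ m' a {x | f x ≠ f' x} = 0 :=
      measure_mono_null (subset_toMeasurable μ _) ha
    exact ae_iff.mpr h0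
  exact Kernel.IndepFun.congr' hfg h' (Eventually.of_forall fun a => EventuallyEq.rfl)

end Aux


section Prod

variable {Ω : Type*} {m' : MeasurableSpace Ω} {mΩ : MeasurableSpace Ω} [StandardBorelSpace Ω]
  [Nonempty Ω] {μ : Measure Ω} [IsProbabilityMeasure μ]

lemma condexp_mul_of_condIndepFun (hm' : m' ≤ mΩ)
    {f A : Ω → ℝ} (hf : Measurable f) (hfi : Integrable f μ)
    (hA : Measurable A) (hA01 : ∀ ω, A ω = 0 ∨ A ω = 1)
    (hindep : CondIndepFun m' hm' f A μ) :
    μ[fun ω => f ω * A ω | m'] =ᵐ[μ] fun ω => (μ[f | m']) ω * (μ[A | m']) ω := by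
  have hAi : Integrable A μ := by
    refine (integrable_const (1 : ℝ)).mono' hA.aestronglyMeasurable ?_
    filter_upwards with ω
    rcases hA01 ω with h | h <;> simp [h]
  have hfAi : Integrable (fun ω => f ω * A ω) μ := by
    refine hfi.norm.mono' (hf.mul hA).aestronglyMeasurable ?_
    filter_upwards with ω
    rcases hA01 ω with h | h <;> simp [h, abs_nonneg]
  set κ := condExpKernel μ m' with hκdef
  set B := A ⁻¹' {1} with hBdef
  have hBmeas : MeasurableSet B := hA (measurableSet_singleton 1)
  have hq : ∀ q : ℚ, ∀ᵐ ω ∂μ,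
      κ ω (f ⁻¹' Set.Iic (q : ℝ) ∩ B) = κ ω (f ⁻¹' Set.Iic (q : ℝ)) * κ ω B := by
    intro q
    have h := Kernel.indepFun_iff_measure_inter_preimage_eq_mul.mp hindep
      (Set.Iic (q : ℝ)) {1} measurableSet_Iic (measurableSet_singleton 1)
    exact ae_of_ae_trim hm' h
  have hq' : ∀ᵐ ω ∂μ, ∀ q : ℚ,
      κ ω (f ⁻¹' Set.Iic (q : ℝ) ∩ B) = κ ω (f ⁻¹' Set.Iic (q : ℝ)) * κ ω B :=
    ae_all_iff.mpr hq
  have hind : ∀ᵐ ω ∂μ, ProbabilityTheory.IndepFun f A (κ ω) := by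
    filter_upwards [hq'] with ω hω
    set p1 : Set (Set Ω) := Set.preimage f '' (⋃ a : ℚ, {Set.Iic (a : ℝ)}) with hp1def
    have hgen1 : MeasurableSpace.comap f (borel ℝ) = MeasurableSpace.generateFrom p1 := by
      conv_lhs => rw [Real.borel_eq_generateFrom_Iic_rat]
      exact MeasurableSpace.comap_generateFrom
    have hgen1' : MeasurableSpace.comap f inferInstance = MeasurableSpace.generateFrom p1 := by
      rw [show (inferInstance : MeasurableSpace ℝ) = borel ℝ from rfl]
      exact hgen1
    have hp1pi : IsPiSystem p1 := Real.isPiSystem_Iic_rat.comap f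
    have hp2pi : IsPiSystem ({B} : Set (Set Ω)) := by
      intro s hs t ht _
      rw [Set.mem_singleton_iff] at hs ht
      subst hs; subst ht; simp
    have hsets : ProbabilityTheory.IndepSets p1 {B} (κ ω) := by
      rw [ProbabilityTheory.IndepSets_iff]
      rintro t1 t2 ⟨s, hs, rfl⟩ ht2
      simp only [Set.mem_iUnion, Set.mem_singleton_iff] at hs
      obtain ⟨q, rfl⟩ := hs
      rw [Set.mem_singleton_iff] at ht2
      subst ht2
      exact hω q
    have hIndep : ProbabilityTheory.Indep (MeasurableSpace.generateFrom p1)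
        (MeasurableSpace.generateFrom ({B} : Set (Set Ω))) (κ ω) := by
      refine ProbabilityTheory.IndepSets.indep ?_ ?_ hp1pi hp2pi rfl rfl hsets
      · rw [← hgen1']; exact hf.comap_le
      · refine MeasurableSpace.generateFrom_le ?_
        rintro s hs
        rw [Set.mem_singleton_iff] at hs
        subst hs
        exact hBmeas
    rw [ProbabilityTheory.indepFun_iff_measure_inter_preimage_eq_mul]
    intro s t hs ht
    have h1 : MeasurableSet[MeasurableSpace.generateFrom p1] (f ⁻¹' s) := by
      rw [← hgen1']; exact ⟨s, hs, rfl⟩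
    have h2 : MeasurableSet[MeasurableSpace.generateFrom ({B} : Set (Set Ω))] (A ⁻¹' t) := by
      have hBg : MeasurableSet[MeasurableSpace.generateFrom ({B} : Set (Set Ω))] B :=
        MeasurableSpace.measurableSet_generateFrom rfl
      by_cases h1t : (1 : ℝ) ∈ t <;> by_cases h0t : (0 : ℝ) ∈ t
      · have he : A ⁻¹' t = Set.univ := by
          ext ω'
          simp only [Set.mem_preimage, Set.mem_univ, iff_true]
          rcases hA01 ω' with h | h <;> simp [h, h0t, h1t]
        rw [he]; exact MeasurableSet.univ
      · have he : A ⁻¹' t = B := by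
          ext ω'
          rcases hA01 ω' with h | h <;> simp [hBdef, h, h0t, h1t]
        rw [he]; exact hBg
      · have he : A ⁻¹' t = Bᶜ := by
          ext ω'
          rcases hA01 ω' with h | h <;>
            simp [hBdef, h, h0t, h1t]
        rw [he]
        exact hBg.compl
      · have he : A ⁻¹' t = ∅ := by
          ext ω'
          rcases hA01 ω' with h | h <;> simp [h, h0t, h1t]
        rw [he]
        exact @MeasurableSet.empty Ω (MeasurableSpace.generateFrom ({B} : Set (Set Ω)))
    exact (ProbabilityTheory.Indep_iff _ _ _).mp hIndep _ _ h1 h2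
  have hc1 := condExp_ae_eq_integral_condExpKernel hm' hfAi
  have hc2 := condExp_ae_eq_integral_condExpKernel hm' hfi
  have hc3 := condExp_ae_eq_integral_condExpKernel hm' hAi
  have hif := hfi.condExpKernel_ae (m := m')
  have hiA := hAi.condExpKernel_ae (m := m')
  filter_upwards [hc1, hc2, hc3, hind, hif, hiA] with ω h1 h2 h3 hiw hfw hAw
  rw [h1, h2, h3]
  exact ProbabilityTheory.IndepFun.integral_fun_mul_eq_mul_integral hiw hfw.aestronglyMeasurable hAw.aestronglyMeasurable

end Prod


/-- Under SUTVA, unconfoundedness and strict positivity, the transformed response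
`Ỹ = Y·(A − π(X)) / (π(X)·(1 − π(X)))` has the contrast function as its conditional mean. -/
theorem transformed_response_conditional_mean_is_contrast
    {Ω : Type*} [m0 : MeasurableSpace Ω] [StandardBorelSpace Ω] [Nonempty Ω]
    {μ : Measure Ω} [IsProbabilityMeasure μ] {p : ℕ}
    (X : Ω → (Fin p → ℝ)) (hX : Measurable X)
    (A : Ω → ℝ) (hA : Measurable A) (hA01 : ∀ ω, A ω = 0 ∨ A ω = 1)
    (Y1 Y0 : Ω → ℝ) (hY1 : Integrable Y1 μ) (hY0 : Integrable Y0 μ)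
    (Y : Ω → ℝ) (hSUTVA : ∀ ω, Y ω = A ω * Y1 ω + (1 - A ω) * Y0 ω)
    (πX : Ω → ℝ)
    (hπmeas : Measurable[MeasurableSpace.comap X inferInstance] πX)
    (hπver : πX =ᵐ[μ] μ[A | MeasurableSpace.comap X inferInstance])
    (hunconf : CondIndepFun (MeasurableSpace.comap X inferInstance) hX.comap_le
      (fun ω => (Y1 ω, Y0 ω)) A μ)
    (ε : ℝ) (hε : 0 < ε)
    (hpos : ∀ᵐ ω ∂μ, ε ≤ πX ω ∧ πX ω ≤ 1 - ε) :
    μ[fun ω => Y ω * (A ω - πX ω) / (πX ω * (1 - πX ω)) |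
        MeasurableSpace.comap X inferInstance]
      =ᵐ[μ] μ[fun ω => Y1 ω - Y0 ω | MeasurableSpace.comap X inferInstance] := by
  have hm' : MeasurableSpace.comap X inferInstance ≤ m0 := hX.comap_le
  -- measurable modifications of the potential outcomes
  set Y1' : Ω → ℝ := hY1.1.mk Y1 with hY1'def
  set Y0' : Ω → ℝ := hY0.1.mk Y0 with hY0'def
  have hY1'm : Measurable Y1' := hY1.1.stronglyMeasurable_mk.measurable
  have hY0'm : Measurable Y0' := hY0.1.stronglyMeasurable_mk.measurable
  have hY1eq : Y1 =ᵐ[μ] Y1' := hY1.1.ae_eq_mk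
  have hY0eq : Y0 =ᵐ[μ] Y0' := hY0.1.ae_eq_mk
  have hY1'i : Integrable Y1' μ := hY1.congr hY1eq
  have hY0'i : Integrable Y0' μ := hY0.congr hY0eq
  -- transfer conditional independence to the modifications
  have hpair : (fun ω => (Y1 ω, Y0 ω)) =ᵐ[μ] (fun ω => (Y1' ω, Y0' ω)) := by
    filter_upwards [hY1eq, hY0eq] with ω h1 h2
    rw [h1, h2]
  have hunconf' : CondIndepFun (MeasurableSpace.comap X inferInstance) hm' (fun ω => (Y1' ω, Y0' ω)) A μ :=
    condIndepFun_congr_left hm' hunconf hpair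
  have hind1 : CondIndepFun (MeasurableSpace.comap X inferInstance) hm' Y1' A μ :=
    hunconf'.comp measurable_fst measurable_id
  have hind0 : CondIndepFun (MeasurableSpace.comap X inferInstance) hm' Y0' A μ :=
    hunconf'.comp measurable_snd measurable_id
  -- basic integrability facts
  have hAbd : ∀ ω, |A ω| ≤ 1 := by
    intro ω; rcases hA01 ω with h | h <;> simp [h]
  have hAi : Integrable A μ := by
    refine (integrable_const (1 : ℝ)).mono' hA.aestronglyMeasurable ?_
    filter_upwards with ω using by simpa using hAbd ω
  have hY1'Ai : Integrable (fun ω => Y1' ω * A ω) μ := by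
    refine hY1'i.norm.mono' (hY1'm.mul hA).aestronglyMeasurable ?_
    filter_upwards with ω
    rcases hA01 ω with h | h <;> simp [h, abs_nonneg]
  have hY0'Ai : Integrable (fun ω => Y0' ω * A ω) μ := by
    refine hY0'i.norm.mono' (hY0'm.mul hA).aestronglyMeasurable ?_
    filter_upwards with ω
    rcases hA01 ω with h | h <;> simp [h, abs_nonneg]
  -- the product identities
  have key1 : μ[fun ω => Y1' ω * A ω | (MeasurableSpace.comap X inferInstance)]
      =ᵐ[μ] fun ω => (μ[Y1' | (MeasurableSpace.comap X inferInstance)]) ω * (μ[A | (MeasurableSpace.comap X inferInstance)]) ω :=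
    condexp_mul_of_condIndepFun hm' hY1'm hY1'i hA hA01 hind1
  have key0 : μ[fun ω => Y0' ω * A ω | (MeasurableSpace.comap X inferInstance)]
      =ᵐ[μ] fun ω => (μ[Y0' | (MeasurableSpace.comap X inferInstance)]) ω * (μ[A | (MeasurableSpace.comap X inferInstance)]) ω :=
    condexp_mul_of_condIndepFun hm' hY0'm hY0'i hA hA01 hind0
  -- measurability of the weight functions
  have hπm : Measurable πX := hπmeas.mono hm' le_rfl
  have hsm1 : StronglyMeasurable[(MeasurableSpace.comap X inferInstance)] (fun ω => (πX ω)⁻¹) :=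
    hπmeas.inv.stronglyMeasurable
  have hsm2 : StronglyMeasurable[(MeasurableSpace.comap X inferInstance)] (fun ω => (1 - πX ω)⁻¹) :=
    (measurable_const.sub hπmeas).inv.stronglyMeasurable
  -- the two pieces of the transformed response
  set g1 : Ω → ℝ := (fun ω => (πX ω)⁻¹) * (fun ω => Y1' ω * A ω) with hg1def
  set g2 : Ω → ℝ := (fun ω => (1 - πX ω)⁻¹) * (fun ω => Y0' ω * (1 - A ω)) with hg2def
  have hg1i : Integrable g1 μ := by
    refine (hY1'i.norm.const_mul ε⁻¹).mono'
      ((hπm.inv.mul (hY1'm.mul hA)).aestronglyMeasurable) ?_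
    filter_upwards [hpos] with ω hb
    have h0 : 0 < πX ω := lt_of_lt_of_le hε hb.1
    have h2 : |πX ω|⁻¹ ≤ ε⁻¹ := by
      rw [abs_of_pos h0]
      exact inv_anti₀ hε hb.1
    have h3 : |Y1' ω * A ω| ≤ |Y1' ω| := by
      rcases hA01 ω with h | h <;> simp [h, abs_nonneg]
    have : ‖g1 ω‖ = |πX ω|⁻¹ * |Y1' ω * A ω| := by
      simp [hg1def, Real.norm_eq_abs, abs_mul, abs_inv]
    rw [this, Real.norm_eq_abs]
    exact mul_le_mul h2 h3 (abs_nonneg _) (le_of_lt (inv_pos.2 hε))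
  have hg2i : Integrable g2 μ := by
    refine (hY0'i.norm.const_mul ε⁻¹).mono'
      (((measurable_const.sub hπm).inv.mul
        (hY0'm.mul (measurable_const.sub hA))).aestronglyMeasurable) ?_
    filter_upwards [hpos] with ω hb
    have h0 : 0 < 1 - πX ω := by linarith [hb.2]
    have h2 : |1 - πX ω|⁻¹ ≤ ε⁻¹ := by
      rw [abs_of_pos h0]
      exact inv_anti₀ hε (by linarith [hb.2])
    have h3 : |Y0' ω * (1 - A ω)| ≤ |Y0' ω| := by
      rcases hA01 ω with h | h <;> simp [h, abs_nonneg]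
    have : ‖g2 ω‖ = |1 - πX ω|⁻¹ * |Y0' ω * (1 - A ω)| := by
      simp [hg2def, Real.norm_eq_abs, abs_mul, abs_inv]
    rw [this, Real.norm_eq_abs]
    exact mul_le_mul h2 h3 (abs_nonneg _) (le_of_lt (inv_pos.2 hε))
  -- the pointwise identity for the transformed response
  have hTeq : (fun ω => Y ω * (A ω - πX ω) / (πX ω * (1 - πX ω))) =ᵐ[μ] g1 - g2 := by
    filter_upwards [hpos, hY1eq, hY0eq] with ω hb h1 h0
    have hπ0 : πX ω ≠ 0 := ne_of_gt (lt_of_lt_of_le hε hb.1)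
    have hπ1 : 1 - πX ω ≠ 0 := ne_of_gt (by linarith [hb.2])
    simp only [Pi.sub_apply, hg1def, hg2def, Pi.mul_apply]
    rw [hSUTVA ω, ← h1, ← h0]
    rcases hA01 ω with h | h <;> rw [h] <;> field_simp <;> ring
  -- pull-out identities
  have hpull1 : μ[g1 | (MeasurableSpace.comap X inferInstance)] =ᵐ[μ]
      (fun ω => (πX ω)⁻¹) * μ[fun ω => Y1' ω * A ω | (MeasurableSpace.comap X inferInstance)] :=
    condExp_mul_of_stronglyMeasurable_left hsm1 (hg1def ▸ hg1i) hY1'Ai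
  have hY0'1Ai : Integrable (fun ω => Y0' ω * (1 - A ω)) μ := by
    have : (fun ω => Y0' ω * (1 - A ω)) = Y0' - fun ω => Y0' ω * A ω := by
      funext ω; simp [Pi.sub_apply]; ring
    rw [this]
    exact hY0'i.sub hY0'Ai
  have hpull2 : μ[g2 | (MeasurableSpace.comap X inferInstance)] =ᵐ[μ]
      (fun ω => (1 - πX ω)⁻¹) * μ[fun ω => Y0' ω * (1 - A ω) | (MeasurableSpace.comap X inferInstance)] :=
    condExp_mul_of_stronglyMeasurable_left hsm2 (hg2def ▸ hg2i) hY0'1Ai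
  -- conditional expectation of `Y0'·(1-A)`
  have hc0sub : μ[fun ω => Y0' ω * (1 - A ω) | (MeasurableSpace.comap X inferInstance)]
      =ᵐ[μ] μ[Y0' | (MeasurableSpace.comap X inferInstance)] - μ[fun ω => Y0' ω * A ω | (MeasurableSpace.comap X inferInstance)] := by
    have he : (fun ω => Y0' ω * (1 - A ω)) = Y0' - fun ω => Y0' ω * A ω := by
      funext ω; simp [Pi.sub_apply]; ring
    rw [he]
    exact condExp_sub hY0'i hY0'Ai _
  -- left-hand side
  have hL : μ[fun ω => Y ω * (A ω - πX ω) / (πX ω * (1 - πX ω)) | (MeasurableSpace.comap X inferInstance)]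
      =ᵐ[μ] fun ω => (μ[Y1' | (MeasurableSpace.comap X inferInstance)]) ω - (μ[Y0' | (MeasurableSpace.comap X inferInstance)]) ω := by
    have h1 : μ[fun ω => Y ω * (A ω - πX ω) / (πX ω * (1 - πX ω)) | (MeasurableSpace.comap X inferInstance)]
        =ᵐ[μ] μ[g1 | (MeasurableSpace.comap X inferInstance)] - μ[g2 | (MeasurableSpace.comap X inferInstance)] :=
      (condExp_congr_ae hTeq).trans (condExp_sub hg1i hg2i _)
    refine h1.trans ?_
    filter_upwards [hpull1, hpull2, key1, key0, hc0sub, hπver, hpos]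
      with ω e1 e2 k1 k0 c0 hv hb
    have hπ0 : πX ω ≠ 0 := ne_of_gt (lt_of_lt_of_le hε hb.1)
    have hπ1 : 1 - πX ω ≠ 0 := ne_of_gt (by linarith [hb.2])
    simp only [Pi.sub_apply, Pi.mul_apply] at e1 e2 c0 ⊢
    rw [e1, e2, k1, c0, k0, ← hv]
    field_simp
  -- right-hand side
  have hR : μ[fun ω => Y1 ω - Y0 ω | (MeasurableSpace.comap X inferInstance)]
      =ᵐ[μ] fun ω => (μ[Y1' | (MeasurableSpace.comap X inferInstance)]) ω - (μ[Y0' | (MeasurableSpace.comap X inferInstance)]) ω := by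
    have hcongr : (fun ω => Y1 ω - Y0 ω) =ᵐ[μ] Y1' - Y0' := by
      filter_upwards [hY1eq, hY0eq] with ω h1 h0
      simp [Pi.sub_apply, h1, h0]
    refine ((condExp_congr_ae hcongr).trans (condExp_sub hY1'i hY0'i _)).trans ?_
    filter_upwards with ω
    simp [Pi.sub_apply]
  exact hL.trans hR.symm
end

section
/- Define the transformed response Ỹ = Y·(A − π(X)) / (π(X)·(1 − π(X))), assume Ỹ is square-integrable, E‖X̃‖² < ∞, that Λ = E[X̃ X̃′] is positive definite, and let β* = Λ^{-1} E[X̃ c(X)] be the population least-squares coefficient of the contrast c(X) on X̃, where c(X) is a σ(X)-measurable version of E[Y*(1) − Y*(0) | σ(X)] with E[c(X)²] < ∞. Then under SUTVA, unconfoundedness and strict positivity, the least-squares score of the transformed response has mean zero at β*: E[X̃ (Ỹ − β*′X̃)] = 0. -/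
open MeasureTheory ProbabilityTheory Matrix

lemma mul_integrable_of_memL2 {α : Type*} [MeasurableSpace α] {μ : Measure α} {f g : α → ℝ}
    (hf : MemLp f 2 μ) (hg : MemLp g 2 μ) : Integrable (fun ω => f ω * g ω) μ := by
  refine Integrable.mono' (hf.integrable_sq.add hg.integrable_sq)
    (hf.aestronglyMeasurable.mul hg.aestronglyMeasurable) ?_
  filter_upwards with ω
  simp only [Pi.add_apply]
  rw [Real.norm_eq_abs, abs_mul]
  nlinarith [sq_nonneg (|f ω| - |g ω|), sq_abs (f ω), sq_abs (g ω)]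

lemma condIndepFun_ae_indepFun {Ω : Type*} {m : MeasurableSpace Ω}
    [mΩ : MeasurableSpace Ω] [StandardBorelSpace Ω]
    [Nonempty Ω] {μ : Measure Ω} [IsFiniteMeasure μ] (hm : m ≤ mΩ)
    {f f' g : Ω → ℝ} (hf' : Measurable f') (hg : Measurable g) (hff' : f =ᵐ[μ] f')
    (h : CondIndepFun m hm f g μ) :
    ∀ᵐ ω ∂μ, IndepFun f' g (condExpKernel μ m ω) := by
  classical
  set κ := condExpKernel μ m with hκ
  set N : Set Ω := toMeasurable μ {ω | f ω ≠ f' ω} with hNdef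
  have hNmeas : MeasurableSet N := measurableSet_toMeasurable _ _
  have hN0 : μ N = 0 := by
    rw [hNdef, measure_toMeasurable]
    exact hff'
  have hker0 : ∀ᵐ ω ∂μ, κ ω N = 0 := by
    have h1 := condExpKernel_ae_eq_condExp hm hNmeas (μ := μ)
    have h2 : (μ⟦N|m⟧) =ᵐ[μ] 0 := by
      have hind : (N.indicator (fun _ => (1 : ℝ))) =ᵐ[μ] (0 : Ω → ℝ) := by
        filter_upwards [measure_eq_zero_iff_ae_notMem.mp hN0] with ω hω
        simp [Set.indicator_of_notMem hω]
      exact (condExp_congr_ae hind).trans (by rw [condExp_zero])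
    filter_upwards [h1, h2] with ω e1 e2
    have : (κ ω N).toReal = 0 := by change (κ ω).real N = 0; rw [e1, e2]; rfl
    rcases (ENNReal.toReal_eq_zero_iff _).mp this with h' | h'
    · exact h'
    · exact absurd h' (measure_ne_top _ _)
  have hmain : ∀ᵐ ω ∂μ, ∀ q r : ℚ,
      κ ω (f' ⁻¹' Set.Iic (q : ℝ) ∩ g ⁻¹' Set.Iic (r : ℝ))
        = κ ω (f' ⁻¹' Set.Iic (q : ℝ)) * κ ω (g ⁻¹' Set.Iic (r : ℝ)) := by
    have h' : ∀ q r : ℚ, ∀ᵐ ω ∂μ,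
        κ ω (f ⁻¹' Set.Iic (q : ℝ) ∩ g ⁻¹' Set.Iic (r : ℝ))
          = κ ω (f ⁻¹' Set.Iic (q : ℝ)) * κ ω (g ⁻¹' Set.Iic (r : ℝ)) := fun q r =>
      ae_of_ae_trim hm
        (Kernel.IndepFun.measure_inter_preimage_eq_mul h _ _ measurableSet_Iic measurableSet_Iic)
    rw [ae_all_iff]
    intro q
    rw [ae_all_iff]
    intro r
    filter_upwards [h' q r, hker0] with ω hω hN0ω
    have hfe : ∀ᵐ x ∂(κ ω), f x = f' x := by
      rw [ae_iff]
      exact measure_mono_null (subset_toMeasurable μ _) hN0ω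
    have e1 : (f' ⁻¹' Set.Iic (q : ℝ)) =ᵐ[κ ω] (f ⁻¹' Set.Iic (q : ℝ)) := by
      filter_upwards [hfe] with x hx
      change (f' x ≤ (q : ℝ)) = (f x ≤ (q : ℝ))
      rw [hx]
    have e2 : (g ⁻¹' Set.Iic (r : ℝ)) =ᵐ[κ ω] (g ⁻¹' Set.Iic (r : ℝ)) := Filter.EventuallyEq.rfl
    rw [measure_congr e1, measure_congr (e1.inter e2), hω]
  filter_upwards [hmain] with ω hω
  haveI : IsProbabilityMeasure (κ ω) := by rw [hκ]; infer_instance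
  have hSgen : (inferInstance : MeasurableSpace ℝ)
      = MeasurableSpace.generateFrom (⋃ a : ℚ, {Set.Iic (a : ℝ)}) := by
    rw [(BorelSpace.measurable_eq : (inferInstance : MeasurableSpace ℝ) = borel ℝ),
      Real.borel_eq_generateFrom_Iic_rat]
  have hgen1 : MeasurableSpace.comap f' (inferInstance : MeasurableSpace ℝ)
      = MeasurableSpace.generateFrom (Set.preimage f' '' (⋃ a : ℚ, {Set.Iic (a : ℝ)})) := by
    conv_lhs => rw [hSgen]
    rw [MeasurableSpace.comap_generateFrom]
  have hgen2 : MeasurableSpace.comap g (inferInstance : MeasurableSpace ℝ)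
      = MeasurableSpace.generateFrom (Set.preimage g '' (⋃ a : ℚ, {Set.Iic (a : ℝ)})) := by
    conv_lhs => rw [hSgen]
    rw [MeasurableSpace.comap_generateFrom]
  have hindepsets : IndepSets (Set.preimage f' '' (⋃ a : ℚ, {Set.Iic (a : ℝ)}))
      (Set.preimage g '' (⋃ a : ℚ, {Set.Iic (a : ℝ)})) (κ ω) := by
    rw [IndepSets_iff]
    rintro t1 t2 ⟨s1, hs1, rfl⟩ ⟨s2, hs2, rfl⟩
    simp only [Set.mem_iUnion, Set.mem_singleton_iff] at hs1 hs2
    obtain ⟨q, rfl⟩ := hs1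
    obtain ⟨r, rfl⟩ := hs2
    exact hω q r
  have hind : Indep (MeasurableSpace.comap f' inferInstance)
      (MeasurableSpace.comap g inferInstance) (κ ω) :=
    IndepSets.indep hf'.comap_le hg.comap_le (Real.isPiSystem_Iic_rat.comap f')
      (Real.isPiSystem_Iic_rat.comap g) hgen1 hgen2 hindepsets
  exact hind

lemma condexp_mul_of_condIndepFun' {Ω : Type*} {m : MeasurableSpace Ω}
    [mΩ : MeasurableSpace Ω] [StandardBorelSpace Ω]
    [Nonempty Ω] {μ : Measure Ω} [IsProbabilityMeasure μ] (hm : m ≤ mΩ)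
    {f g : Ω → ℝ} (hg : Measurable g)
    (hfg : CondIndepFun m hm f g μ)
    (hf1 : Integrable f μ) (hg1 : Integrable g μ)
    (hprod : Integrable (fun ω => f ω * g ω) μ) :
    μ[fun ω => f ω * g ω|m] =ᵐ[μ] fun ω => (μ[f|m]) ω * (μ[g|m]) ω := by
  set f' : Ω → ℝ := hf1.1.mk f with hf'def
  have hf'meas : Measurable f' := hf1.1.stronglyMeasurable_mk.measurable
  have hff' : f =ᵐ[μ] f' := hf1.1.ae_eq_mk
  have hae := condIndepFun_ae_indepFun hm hf'meas hg hff' hfg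
  have hprod' : Integrable (fun ω => f' ω * g ω) μ :=
    hprod.congr (by filter_upwards [hff'] with ω hω; rw [hω])
  have hf1' : Integrable f' μ := hf1.congr hff'
  have e0 : μ[fun ω => f ω * g ω|m] =ᵐ[μ] μ[fun ω => f' ω * g ω|m] :=
    condExp_congr_ae (by filter_upwards [hff'] with ω hω; rw [hω])
  have e1 := condExp_ae_eq_integral_condExpKernel hm hprod'
  have e2 := condExp_ae_eq_integral_condExpKernel hm hf1'
  have e2' : μ[f|m] =ᵐ[μ] μ[f'|m] := condExp_congr_ae hff'
  have e3 := condExp_ae_eq_integral_condExpKernel hm hg1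
  filter_upwards [e0, e1, e2, e2', e3, hae] with ω h0 h1 h2 h2' h3 hind
  rw [h0, h1, h2', h2, h3]
  have := ProbabilityTheory.IndepFun.integral_mul_eq_mul_integral hind hf'meas.aestronglyMeasurable hg.aestronglyMeasurable
  simpa [Pi.mul_apply] using this

/-- Under SUTVA, unconfoundedness and strict positivity, the least-squares score of the
transformed response `Ỹ = Y(A − π(X))/(π(X)(1 − π(X)))` has mean zero at the population
least-squares coefficient `β* = Λ⁻¹ E[X̃ c(X)]` of the contrast on `X̃`. -/
theorem transformed_response_score_mean_zero
    {Ω : Type*} [m0 : MeasurableSpace Ω] [StandardBorelSpace Ω] [Nonempty Ω]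
    {μ : Measure Ω} [IsProbabilityMeasure μ] {p : ℕ}
    (X : Ω → (Fin p → ℝ)) (hX : Measurable X)
    (A : Ω → ℝ) (hA : Measurable A) (hA01 : ∀ ω, A ω = 0 ∨ A ω = 1)
    (Y1 Y0 : Ω → ℝ) (hY1 : Integrable Y1 μ) (hY0 : Integrable Y0 μ)
    (Y : Ω → ℝ) (hSUTVA : ∀ ω, Y ω = A ω * Y1 ω + (1 - A ω) * Y0 ω)
    (πX : Ω → ℝ)
    (hπmeas : Measurable[MeasurableSpace.comap X inferInstance] πX)
    (hπver : πX =ᵐ[μ] μ[A | MeasurableSpace.comap X inferInstance])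
    (hunconf : CondIndepFun (MeasurableSpace.comap X inferInstance) hX.comap_le
      (fun ω => (Y1 ω, Y0 ω)) A μ)
    (ε : ℝ) (hε : 0 < ε)
    (hpos : ∀ᵐ ω ∂μ, ε ≤ πX ω ∧ πX ω ≤ 1 - ε)
    (Yt : Ω → ℝ) (hYt : ∀ ω, Yt ω = Y ω * (A ω - πX ω) / (πX ω * (1 - πX ω)))
    (hYt2 : MemLp Yt 2 μ)
    (Xt : Ω → (Fin (p + 1) → ℝ)) (hXt : ∀ ω, Xt ω = Fin.cons 1 (X ω))
    (hXt2 : MemLp Xt 2 μ)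
    (c : (Fin p → ℝ) → ℝ) (hc : Measurable c)
    (hcmeas : Measurable[MeasurableSpace.comap X inferInstance] (fun ω => c (X ω)))
    (hcver : (fun ω => c (X ω))
      =ᵐ[μ] μ[fun ω => Y1 ω - Y0 ω | MeasurableSpace.comap X inferInstance])
    (hc2 : MemLp (fun ω => c (X ω)) 2 μ)
    (Λ : Matrix (Fin (p + 1)) (Fin (p + 1)) ℝ)
    (hΛ : Λ = Matrix.of fun i j => ∫ ω, Xt ω i * Xt ω j ∂μ)
    (hΛpd : Λ.PosDef)
    (βstar : Fin (p + 1) → ℝ)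
    (hβstar : βstar = Λ⁻¹ *ᵥ (fun i => ∫ ω, Xt ω i * c (X ω) ∂μ)) :
    (fun i => ∫ ω, Xt ω i * (Yt ω - βstar ⬝ᵥ Xt ω) ∂μ) = 0 := by
  have hm : MeasurableSpace.comap X (inferInstance : MeasurableSpace (Fin p → ℝ)) ≤ m0 :=
    hX.comap_le
  haveI : SigmaFinite (μ.trim hm) := by
    have : IsFiniteMeasure (μ.trim hm) := isFiniteMeasure_trim hm
    infer_instance
  -- basic bounds and integrability
  have hAbs : ∀ ω, |A ω| ≤ 1 := by
    intro ω; rcases hA01 ω with h | h <;> simp [h]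
  have h1Abs : ∀ ω, |1 - A ω| ≤ 1 := by
    intro ω; rcases hA01 ω with h | h <;> simp [h]
  have hAint : Integrable A μ := by
    refine Integrable.mono' (integrable_const 1) hA.aestronglyMeasurable ?_
    filter_upwards with ω
    simpa [Real.norm_eq_abs] using hAbs ω
  have hg2 : Measurable (fun ω => 1 - A ω) := measurable_const.sub hA
  have hg2int : Integrable (fun ω => 1 - A ω) μ := (integrable_const 1).sub hAint
  have hY1A : Integrable (fun ω => Y1 ω * A ω) μ := by
    refine Integrable.mono' hY1.norm (hY1.1.mul hA.aestronglyMeasurable) ?_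
    filter_upwards with ω
    rw [Real.norm_eq_abs, abs_mul, Real.norm_eq_abs]
    nlinarith [hAbs ω, abs_nonneg (Y1 ω), abs_nonneg (A ω)]
  have hY0g2 : Integrable (fun ω => Y0 ω * (1 - A ω)) μ := by
    refine Integrable.mono' hY0.norm (hY0.1.mul hg2.aestronglyMeasurable) ?_
    filter_upwards with ω
    rw [Real.norm_eq_abs, abs_mul, Real.norm_eq_abs]
    nlinarith [h1Abs ω, abs_nonneg (Y0 ω), abs_nonneg (1 - A ω)]
  have hπm0 : Measurable πX := hπmeas.mono hm le_rfl
  -- the two transformed terms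
  have hT1int : Integrable ((fun ω => (πX ω)⁻¹) * fun ω => Y1 ω * A ω) μ := by
    refine Integrable.mono' (hY1.norm.const_mul ε⁻¹)
      ((hπm0.inv.aestronglyMeasurable).mul (hY1.1.mul hA.aestronglyMeasurable)) ?_
    filter_upwards [hpos] with ω hω
    obtain ⟨h1, h2⟩ := hω
    have hπpos : 0 < πX ω := lt_of_lt_of_le hε h1
    have hinv : |(πX ω)⁻¹| ≤ ε⁻¹ := by
      rw [abs_of_pos (inv_pos.mpr hπpos)]
      exact inv_anti₀ hε h1
    simp only [Pi.mul_apply]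
    rw [Real.norm_eq_abs, abs_mul, abs_mul, Real.norm_eq_abs]
    have h3 : |Y1 ω| * |A ω| ≤ |Y1 ω| := by
      nlinarith [hAbs ω, abs_nonneg (Y1 ω), abs_nonneg (A ω)]
    have h4 : (0:ℝ) < ε⁻¹ := inv_pos.mpr hε
    nlinarith [abs_nonneg ((πX ω)⁻¹), abs_nonneg (Y1 ω), abs_nonneg (A ω),
      mul_le_mul_of_nonneg_left h3 (abs_nonneg ((πX ω)⁻¹)),
      mul_le_mul_of_nonneg_right hinv (abs_nonneg (Y1 ω))]
  have hT2int : Integrable ((fun ω => (1 - πX ω)⁻¹) * fun ω => Y0 ω * (1 - A ω)) μ := by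
    refine Integrable.mono' (hY0.norm.const_mul ε⁻¹)
      (((measurable_const.sub hπm0).inv.aestronglyMeasurable).mul
        (hY0.1.mul hg2.aestronglyMeasurable)) ?_
    filter_upwards [hpos] with ω hω
    obtain ⟨h1, h2⟩ := hω
    have hπpos : 0 < 1 - πX ω := lt_of_lt_of_le hε (by linarith)
    have hinv : |(1 - πX ω)⁻¹| ≤ ε⁻¹ := by
      rw [abs_of_pos (inv_pos.mpr hπpos)]
      exact inv_anti₀ hε (by linarith)
    simp only [Pi.mul_apply]
    rw [Real.norm_eq_abs, abs_mul, abs_mul, Real.norm_eq_abs]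
    have h3 : |Y0 ω| * |1 - A ω| ≤ |Y0 ω| := by
      nlinarith [h1Abs ω, abs_nonneg (Y0 ω), abs_nonneg (1 - A ω)]
    nlinarith [abs_nonneg ((1 - πX ω)⁻¹), abs_nonneg (Y0 ω), abs_nonneg (1 - A ω),
      mul_le_mul_of_nonneg_left h3 (abs_nonneg ((1 - πX ω)⁻¹)),
      mul_le_mul_of_nonneg_right hinv (abs_nonneg (Y0 ω))]
  -- decomposition of Yt
  have hYtae : Yt =ᵐ[μ] ((fun ω => (πX ω)⁻¹) * fun ω => Y1 ω * A ω)
      - ((fun ω => (1 - πX ω)⁻¹) * fun ω => Y0 ω * (1 - A ω)) := by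
    filter_upwards [hpos] with ω hω
    obtain ⟨h1, h2⟩ := hω
    have hπ0 : πX ω ≠ 0 := ne_of_gt (lt_of_lt_of_le hε h1)
    have hπ1 : 1 - πX ω ≠ 0 := ne_of_gt (lt_of_lt_of_le hε (by linarith))
    simp only [Pi.sub_apply, Pi.mul_apply]
    rw [hYt ω, hSUTVA ω]
    rcases hA01 ω with h | h <;> rw [h] <;> field_simp <;> ring
  -- conditional independence
  have hCI1 : CondIndepFun (MeasurableSpace.comap X (inferInstance : MeasurableSpace (Fin p → ℝ))) hm Y1 A μ := hunconf.comp measurable_fst measurable_id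
  have hCI0 : CondIndepFun (MeasurableSpace.comap X (inferInstance : MeasurableSpace (Fin p → ℝ))) hm Y0 (fun ω => 1 - A ω) μ :=
    hunconf.comp measurable_snd (measurable_const.sub measurable_id)
  have hmul1 : μ[fun ω => Y1 ω * A ω|(MeasurableSpace.comap X (inferInstance : MeasurableSpace (Fin p → ℝ)))] =ᵐ[μ] fun ω => (μ[Y1|(MeasurableSpace.comap X (inferInstance : MeasurableSpace (Fin p → ℝ)))]) ω * (μ[A|(MeasurableSpace.comap X (inferInstance : MeasurableSpace (Fin p → ℝ)))]) ω :=
    condexp_mul_of_condIndepFun' hm hA hCI1 hY1 hAint hY1A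
  have hmul0 : μ[fun ω => Y0 ω * (1 - A ω)|(MeasurableSpace.comap X (inferInstance : MeasurableSpace (Fin p → ℝ)))]
      =ᵐ[μ] fun ω => (μ[Y0|(MeasurableSpace.comap X (inferInstance : MeasurableSpace (Fin p → ℝ)))]) ω * (μ[fun ω => 1 - A ω|(MeasurableSpace.comap X (inferInstance : MeasurableSpace (Fin p → ℝ)))]) ω :=
    condexp_mul_of_condIndepFun' hm hg2 hCI0 hY0 hg2int hY0g2
  have h1Acond : μ[fun ω => 1 - A ω|(MeasurableSpace.comap X (inferInstance : MeasurableSpace (Fin p → ℝ)))] =ᵐ[μ] fun ω => 1 - πX ω := by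
    have h : μ[(fun _ : Ω => (1:ℝ)) - A|(MeasurableSpace.comap X (inferInstance : MeasurableSpace (Fin p → ℝ)))] =ᵐ[μ] μ[fun _ : Ω => (1:ℝ)|(MeasurableSpace.comap X (inferInstance : MeasurableSpace (Fin p → ℝ)))] - μ[A|(MeasurableSpace.comap X (inferInstance : MeasurableSpace (Fin p → ℝ)))] :=
      condExp_sub (integrable_const (1:ℝ)) hAint _
    refine h.trans ?_
    have hc1 : μ[(fun _ : Ω => (1:ℝ))|(MeasurableSpace.comap X (inferInstance : MeasurableSpace (Fin p → ℝ)))] = fun _ => (1:ℝ) := condExp_const hm 1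
    filter_upwards [hπver] with ω hω
    simp only [Pi.sub_apply, hc1]
    rw [← hω]
  -- pull-out
  have hT1pull : μ[(fun ω => (πX ω)⁻¹) * fun ω => Y1 ω * A ω|(MeasurableSpace.comap X (inferInstance : MeasurableSpace (Fin p → ℝ)))]
      =ᵐ[μ] (fun ω => (πX ω)⁻¹) * μ[fun ω => Y1 ω * A ω|(MeasurableSpace.comap X (inferInstance : MeasurableSpace (Fin p → ℝ)))] :=
    condExp_mul_of_stronglyMeasurable_left hπmeas.inv.stronglyMeasurable hT1int hY1A
  have hT2pull : μ[(fun ω => (1 - πX ω)⁻¹) * fun ω => Y0 ω * (1 - A ω)|(MeasurableSpace.comap X (inferInstance : MeasurableSpace (Fin p → ℝ)))]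
      =ᵐ[μ] (fun ω => (1 - πX ω)⁻¹) * μ[fun ω => Y0 ω * (1 - A ω)|(MeasurableSpace.comap X (inferInstance : MeasurableSpace (Fin p → ℝ)))] :=
    condExp_mul_of_stronglyMeasurable_left ((measurable_const.sub hπmeas).inv).stronglyMeasurable
      hT2int hY0g2
  have hT1 : μ[(fun ω => (πX ω)⁻¹) * fun ω => Y1 ω * A ω|(MeasurableSpace.comap X (inferInstance : MeasurableSpace (Fin p → ℝ)))] =ᵐ[μ] μ[Y1|(MeasurableSpace.comap X (inferInstance : MeasurableSpace (Fin p → ℝ)))] := by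
    filter_upwards [hT1pull, hmul1, hπver, hpos] with ω e1 e2 e3 e4
    rw [e1]
    simp only [Pi.mul_apply]
    rw [e2, ← e3]
    have hπ0 : πX ω ≠ 0 := ne_of_gt (lt_of_lt_of_le hε e4.1)
    field_simp
  have hT2 : μ[(fun ω => (1 - πX ω)⁻¹) * fun ω => Y0 ω * (1 - A ω)|(MeasurableSpace.comap X (inferInstance : MeasurableSpace (Fin p → ℝ)))] =ᵐ[μ] μ[Y0|(MeasurableSpace.comap X (inferInstance : MeasurableSpace (Fin p → ℝ)))] := by
    filter_upwards [hT2pull, hmul0, h1Acond, hpos] with ω e1 e2 e3 e4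
    rw [e1]
    simp only [Pi.mul_apply]
    rw [e2, e3]
    have hπ1 : 1 - πX ω ≠ 0 := ne_of_gt (lt_of_lt_of_le hε (by linarith [e4.2]))
    field_simp
  -- E[Yt | (MeasurableSpace.comap X (inferInstance : MeasurableSpace (Fin p → ℝ)))] = c(X)
  have hYtcond : μ[Yt|(MeasurableSpace.comap X (inferInstance : MeasurableSpace (Fin p → ℝ)))] =ᵐ[μ] fun ω => c (X ω) := by
    have hdiff : μ[fun ω => Y1 ω - Y0 ω|(MeasurableSpace.comap X (inferInstance : MeasurableSpace (Fin p → ℝ)))] =ᵐ[μ] μ[Y1|(MeasurableSpace.comap X (inferInstance : MeasurableSpace (Fin p → ℝ)))] - μ[Y0|(MeasurableSpace.comap X (inferInstance : MeasurableSpace (Fin p → ℝ)))] := condExp_sub hY1 hY0 _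
    calc μ[Yt|(MeasurableSpace.comap X (inferInstance : MeasurableSpace (Fin p → ℝ)))]
        =ᵐ[μ] μ[((fun ω => (πX ω)⁻¹) * fun ω => Y1 ω * A ω)
          - ((fun ω => (1 - πX ω)⁻¹) * fun ω => Y0 ω * (1 - A ω))|(MeasurableSpace.comap X (inferInstance : MeasurableSpace (Fin p → ℝ)))] := condExp_congr_ae hYtae
      _ =ᵐ[μ] μ[(fun ω => (πX ω)⁻¹) * fun ω => Y1 ω * A ω|(MeasurableSpace.comap X (inferInstance : MeasurableSpace (Fin p → ℝ)))]
          - μ[(fun ω => (1 - πX ω)⁻¹) * fun ω => Y0 ω * (1 - A ω)|(MeasurableSpace.comap X (inferInstance : MeasurableSpace (Fin p → ℝ)))] :=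
            condExp_sub hT1int hT2int _
      _ =ᵐ[μ] fun ω => c (X ω) := by
          filter_upwards [hT1, hT2, hdiff, hcver] with ω e1 e2 e3 e4
          simp only [Pi.sub_apply]
          rw [e1, e2, e4, e3]
          simp [Pi.sub_apply]
  -- measurability and integrability of components of Xt
  have hXm : Measurable[(MeasurableSpace.comap X (inferInstance : MeasurableSpace (Fin p → ℝ)))] X := measurable_iff_comap_le.mpr le_rfl
  have hgm : ∀ i, Measurable[(MeasurableSpace.comap X (inferInstance : MeasurableSpace (Fin p → ℝ)))] fun ω => Xt ω i := by
    intro i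
    simp_rw [hXt]
    refine Fin.cases ?_ ?_ i
    · simp only [Fin.cons_zero]
      exact measurable_const
    · intro j
      simp only [Fin.cons_succ]
      exact (measurable_pi_apply j).comp hXm
  have hXti2 : ∀ i, MemLp (fun ω => Xt ω i) 2 μ := by
    intro i
    refine MemLp.of_le hXt2 (((hgm i).mono hm le_rfl).stronglyMeasurable.aestronglyMeasurable) ?_
    filter_upwards with ω
    exact norm_le_pi_norm (Xt ω) i
  have hYtInt : Integrable Yt μ := hYt2.integrable one_le_two
  have hprod : ∀ i j, Integrable (fun ω => Xt ω i * Xt ω j) μ := fun i j =>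
    mul_integrable_of_memL2 (hXti2 i) (hXti2 j)
  have hXtYt : ∀ i, Integrable (fun ω => Xt ω i * Yt ω) μ := fun i =>
    mul_integrable_of_memL2 (hXti2 i) hYt2
  -- key identity
  have hkey : ∀ i, ∫ ω, Xt ω i * Yt ω ∂μ = ∫ ω, Xt ω i * c (X ω) ∂μ := by
    intro i
    have h1 : μ[(fun ω => Xt ω i) * Yt|(MeasurableSpace.comap X (inferInstance : MeasurableSpace (Fin p → ℝ)))] =ᵐ[μ] (fun ω => Xt ω i) * μ[Yt|(MeasurableSpace.comap X (inferInstance : MeasurableSpace (Fin p → ℝ)))] :=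
      condExp_mul_of_stronglyMeasurable_left (hgm i).stronglyMeasurable (hXtYt i) hYtInt
    calc ∫ ω, Xt ω i * Yt ω ∂μ
        = ∫ ω, (μ[(fun ω => Xt ω i) * Yt|(MeasurableSpace.comap X (inferInstance : MeasurableSpace (Fin p → ℝ)))]) ω ∂μ := (integral_condExp hm).symm
      _ = ∫ ω, Xt ω i * c (X ω) ∂μ := by
          refine integral_congr_ae ?_
          filter_upwards [h1, hYtcond] with ω e1 e2
          rw [e1]
          simp only [Pi.mul_apply]
          rw [e2]
  -- matrix part
  have hdet : IsUnit Λ.det := isUnit_iff_ne_zero.mpr (ne_of_gt hΛpd.det_pos)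
  have hmv : Λ *ᵥ βstar = fun i => ∫ ω, Xt ω i * c (X ω) ∂μ := by
    rw [hβstar, Matrix.mulVec_mulVec, Matrix.mul_nonsing_inv _ hdet, Matrix.one_mulVec]
  have hβint : ∀ i, Integrable (fun ω => Xt ω i * (βstar ⬝ᵥ Xt ω)) μ := by
    intro i
    simp_rw [dotProduct, Finset.mul_sum]
    refine integrable_finset_sum _ fun j _ => ?_
    have := (hprod i j).const_mul (βstar j)
    refine this.congr ?_
    filter_upwards with ω
    ring
  have hsum : ∀ i, ∫ ω, Xt ω i * (βstar ⬝ᵥ Xt ω) ∂μ = ∫ ω, Xt ω i * c (X ω) ∂μ := by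
    intro i
    have h2 : ∫ ω, Xt ω i * (βstar ⬝ᵥ Xt ω) ∂μ
        = ∑ j, βstar j * ∫ ω, Xt ω i * Xt ω j ∂μ := by
      simp_rw [dotProduct, Finset.mul_sum]
      rw [integral_finset_sum _ (fun j _ => by
        have := (hprod i j).const_mul (βstar j)
        refine this.congr ?_
        filter_upwards with ω
        ring)]
      refine Finset.sum_congr rfl fun j _ => ?_
      rw [show (fun ω => Xt ω i * (βstar j * Xt ω j)) = fun ω => βstar j * (Xt ω i * Xt ω j) by
        funext ω; ring]
      exact integral_const_mul _ _
    have h3 : (Λ *ᵥ βstar) i = ∑ j, βstar j * ∫ ω, Xt ω i * Xt ω j ∂μ := by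
      rw [Matrix.mulVec, dotProduct]
      refine Finset.sum_congr rfl fun j _ => ?_
      rw [hΛ]
      simp [Matrix.of_apply, mul_comm]
    rw [h2, ← h3, hmv]
  -- conclusion
  funext i
  have hfinal : ∫ ω, Xt ω i * (Yt ω - βstar ⬝ᵥ Xt ω) ∂μ
      = ∫ ω, Xt ω i * Yt ω ∂μ - ∫ ω, Xt ω i * (βstar ⬝ᵥ Xt ω) ∂μ := by
    rw [← integral_sub (hXtYt i) (hβint i)]
    refine integral_congr_ae ?_
    filter_upwards with ω
    ring
  have : ∫ ω, Xt ω i * (Yt ω - βstar ⬝ᵥ Xt ω) ∂μ = 0 := by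
    rw [hfinal, hkey i, hsum i, sub_self]
  simpa using this
end
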